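/- arXiv:2303.06653 — 4 statements merged into one kernel-verified Lean document; each statement's English description precedes it below -/
import Mathlib

section
/- Let 0 < α₁, α₂ < 1, c > 0, λ > 0, and for real s > 0 set H(s) = (1/s)·(1 + λ s^{−sA(s)})^{−1} with sA(s) = (α₂c + α₁s)/(c+s), and ℰ(s) = s^{α₁−1}/(s^{α₁}+λ). Then lim_{s→∞} s·(H(s) − ℰ(s)) = 0. -/
open Filter

theorem relaxation_solution_matches_ML_small_time
    (α₁ α₂ c lam : ℝ) (h1 : 0 < α₁) (h1' : α₁ < 1) (h2 : 0 < α₂) (h2' : α₂ < 1)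
    (hc : 0 < c) (hlam : 0 < lam) :
    Tendsto (fun s : ℝ =>
        s * ((1 / s) * (1 + lam * s ^ (-((α₂ * c + α₁ * s) / (c + s))))⁻¹
              - s ^ (α₁ - 1) / (s ^ α₁ + lam)))
      atTop (nhds 0) := by
  have hm0 : 0 < min α₁ α₂ := lt_min h1 h2
  have hA0 : Tendsto (fun s : ℝ => s ^ (-((α₂ * c + α₁ * s) / (c + s)))) atTop (nhds 0) := by
    have hub : ∀ᶠ s : ℝ in atTop,
        s ^ (-((α₂ * c + α₁ * s) / (c + s))) ≤ s ^ (-(min α₁ α₂)) := by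
      filter_upwards [eventually_ge_atTop (1:ℝ)] with s hs
      apply Real.rpow_le_rpow_of_exponent_le hs
      have hcs : 0 < c + s := by linarith
      rw [neg_le_neg_iff, le_div_iff₀ hcs]
      have h1m : min α₁ α₂ ≤ α₁ := min_le_left _ _
      have h2m : min α₁ α₂ ≤ α₂ := min_le_right _ _
      nlinarith
    have hlb : ∀ᶠ s : ℝ in atTop, 0 ≤ s ^ (-((α₂ * c + α₁ * s) / (c + s))) := by
      filter_upwards [eventually_gt_atTop (0:ℝ)] with s hs
      exact (Real.rpow_pos_of_pos hs _).le
    exact squeeze_zero' hlb hub (tendsto_rpow_neg_atTop hm0)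
  have hα0 : Tendsto (fun s : ℝ => s ^ (-α₁)) atTop (nhds 0) := tendsto_rpow_neg_atTop h1
  have hinv : Tendsto (fun s : ℝ =>
      (1 + lam * s ^ (-((α₂ * c + α₁ * s) / (c + s))))⁻¹
      - (1 + lam * s ^ (-α₁))⁻¹) atTop (nhds 0) := by
    have t1 : Tendsto (fun s : ℝ =>
        (1 + lam * s ^ (-((α₂ * c + α₁ * s) / (c + s))))⁻¹) atTop (nhds 1) := by
      have h : Tendsto (fun s : ℝ =>
          1 + lam * s ^ (-((α₂ * c + α₁ * s) / (c + s)))) atTop (nhds 1) := by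
        have := hA0.const_mul lam
        simpa using (tendsto_const_nhds (α := ℝ) (x := (1:ℝ))).add this
      simpa using h.inv₀ one_ne_zero
    have t2 : Tendsto (fun s : ℝ => (1 + lam * s ^ (-α₁))⁻¹) atTop (nhds 1) := by
      have h : Tendsto (fun s : ℝ => 1 + lam * s ^ (-α₁)) atTop (nhds 1) := by
        have := hα0.const_mul lam
        simpa using (tendsto_const_nhds (α := ℝ) (x := (1:ℝ))).add this
      simpa using h.inv₀ one_ne_zero
    simpa using t1.sub t2
  refine Tendsto.congr' ?_ hinv
  filter_upwards [eventually_gt_atTop (0:ℝ)] with s hs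
  have hs0 : s ≠ 0 := ne_of_gt hs
  have hpow : (0:ℝ) < s ^ α₁ := Real.rpow_pos_of_pos hs _
  have hden : s ^ α₁ + lam ≠ 0 := by positivity
  have hss : s * s ^ (α₁ - 1) = s ^ α₁ := by
    nth_rewrite 1 [← Real.rpow_one s]
    rw [← Real.rpow_add hs]
    norm_num
  have key : (1 + lam * s ^ (-α₁))⁻¹ = s * (s ^ (α₁ - 1) / (s ^ α₁ + lam)) := by
    rw [Real.rpow_neg hs.le]
    rw [show s * (s ^ (α₁ - 1) / (s ^ α₁ + lam)) = (s * s ^ (α₁ - 1)) / (s ^ α₁ + lam) by ring,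
      hss]
    rw [eq_div_iff hden, inv_mul_eq_div, div_eq_iff]
    · field_simp
    · positivity
  have : s * ((1 / s) * (1 + lam * s ^ (-((α₂ * c + α₁ * s) / (c + s))))⁻¹
        - s ^ (α₁ - 1) / (s ^ α₁ + lam))
      = (1 + lam * s ^ (-((α₂ * c + α₁ * s) / (c + s))))⁻¹
        - s * (s ^ (α₁ - 1) / (s ^ α₁ + lam)) := by
    field_simp
  rw [this, key]
end

section
/- Let 0 < α₁, α₂ < 1, c > 0, λ > 0, H(s) = (1/s)(1 + λ s^{−sA(s)})^{−1} with sA(s) = (α₂c + α₁s)/(c+s), and ℰ₂(s) = s^{α₂−1}/(s^{α₂}+λ), for real s > 0. Then lim_{s→0⁺} s·(H(s) − ℰ₂(s)) = 0. -/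
open Filter Real

theorem relaxation_solution_matches_ML_large_time
    (α₁ α₂ c lam : ℝ) (h1 : 0 < α₁) (h1' : α₁ < 1) (h2 : 0 < α₂) (h2' : α₂ < 1)
    (hc : 0 < c) (hlam : 0 < lam) :
    Tendsto (fun s : ℝ =>
        s * ((1 / s) * (1 + lam * s ^ (-((α₂ * c + α₁ * s) / (c + s))))⁻¹
              - s ^ (α₂ - 1) / (s ^ α₂ + lam)))
      (nhdsWithin 0 (Set.Ioi 0)) (nhds 0) := by
  have hexp : Tendsto (fun s : ℝ => -((α₂ * c + α₁ * s) / (c + s)))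
      (nhdsWithin 0 (Set.Ioi 0)) (nhds (-α₂)) := by
    have : Tendsto (fun s : ℝ => -((α₂ * c + α₁ * s) / (c + s))) (nhds 0) (nhds (-α₂)) := by
      have h : ContinuousAt (fun s : ℝ => -((α₂ * c + α₁ * s) / (c + s))) 0 := by
        apply ContinuousAt.neg
        apply ContinuousAt.div (by fun_prop) (by fun_prop)
        simpa using hc.ne'
      have ht := h.tendsto
      have h0 : -((α₂ * c + α₁ * (0:ℝ)) / (c + 0)) = -α₂ := by
        rw [mul_zero, add_zero, add_zero, mul_div_assoc, div_self hc.ne', mul_one]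
      rwa [h0] at ht
    exact this.mono_left nhdsWithin_le_nhds
  -- lam * s ^ (exponent) → atTop
  have hrpow : Tendsto (fun s : ℝ => s ^ (-((α₂ * c + α₁ * s) / (c + s))))
      (nhdsWithin 0 (Set.Ioi 0)) atTop := by
    have hlog : Tendsto (fun s : ℝ => Real.log s * -((α₂ * c + α₁ * s) / (c + s)))
        (nhdsWithin 0 (Set.Ioi 0)) atTop :=
      Filter.Tendsto.atBot_mul_neg (by linarith) Real.tendsto_log_nhdsGT_zero hexp
    have := Real.tendsto_exp_atTop.comp hlog
    apply this.congr'
    filter_upwards [self_mem_nhdsWithin] with s hs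
    simp only [Function.comp]
    rw [Real.rpow_def_of_pos hs]
  have hA : Tendsto (fun s : ℝ => (1 + lam * s ^ (-((α₂ * c + α₁ * s) / (c + s))))⁻¹)
      (nhdsWithin 0 (Set.Ioi 0)) (nhds 0) := by
    apply Filter.Tendsto.inv_tendsto_atTop
    exact tendsto_atTop_add_const_left _ 1 (hrpow.const_mul_atTop hlam)
  have hB : Tendsto (fun s : ℝ => s ^ α₂ / (s ^ α₂ + lam))
      (nhdsWithin 0 (Set.Ioi 0)) (nhds 0) := by
    have hp : Tendsto (fun s : ℝ => s ^ α₂) (nhdsWithin 0 (Set.Ioi 0)) (nhds 0) := by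
      have : ContinuousAt (fun s : ℝ => s ^ α₂) 0 :=
        Real.continuousAt_rpow_const 0 α₂ (Or.inr h2.le)
      have h0 : (0:ℝ) ^ α₂ = 0 := Real.zero_rpow h2.ne'
      simpa [ContinuousAt, h0] using this.tendsto.mono_left nhdsWithin_le_nhds
    have := hp.div (hp.add tendsto_const_nhds) (by simpa using hlam.ne')
    rw [zero_add, zero_div] at this
    exact this
  have key := hA.sub hB
  rw [sub_zero] at key
  apply key.congr'
  filter_upwards [self_mem_nhdsWithin] with s hs
  have hs0 : (s : ℝ) ≠ 0 := ne_of_gt hs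
  rw [mul_sub, ← mul_assoc, mul_one_div, div_self hs0, one_mul, ← mul_div_assoc]
  congr 1
  rw [show s * s ^ (α₂ - 1) = s ^ (1:ℝ) * s ^ (α₂ - 1) by rw [Real.rpow_one],
    ← Real.rpow_add hs]
  ring_nf
end

section
/- Let 0 < α₁, α₂ < 1 and c > 0, and consider A(x,y) = (α₁y² + (ch+1−x)(α₁(1−x)+α₂ch)) / ((ch+1−x)² + y²) for (x,y) with x² + y² = ρ², 0 < ρ < 1, h > 0. Then 0 ≤ A(x,y) and, when α₁ < α₂, A(x,y) ≤ A(ρ,0) = (α₁(1−ρ)+α₂ch)/(ch+1−ρ), and ρ ↦ A(ρ,0) is strictly increasing on (0,1). -/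
theorem real_part_exponent_properties
    (α₁ α₂ c h ρ x y : ℝ) (h1 : 0 < α₁) (h1' : α₁ < 1) (h2 : 0 < α₂) (h2' : α₂ < 1)
    (hc : 0 < c) (hh : 0 < h) (hρ : 0 < ρ) (hρ' : ρ < 1)
    (hxy : x ^ 2 + y ^ 2 = ρ ^ 2) :
    let A : ℝ → ℝ → ℝ := fun x y =>
      (α₁ * y ^ 2 + (c * h + 1 - x) * (α₁ * (1 - x) + α₂ * c * h)) /
        ((c * h + 1 - x) ^ 2 + y ^ 2)
    0 ≤ A x y ∧
      (α₁ < α₂ → A x y ≤ A ρ 0 ∧ StrictMonoOn (fun t => A t 0) (Set.Ioo 0 1)) ∧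
      A ρ 0 = (α₁ * (1 - ρ) + α₂ * c * h) / (c * h + 1 - ρ) := by
  intro A
  have hch : (0:ℝ) < c * h := mul_pos hc hh
  have hxρ : x ≤ ρ := by nlinarith [sq_nonneg y]
  have hx1 : 0 < c * h + 1 - x := by linarith
  have hDρ : 0 < c * h + 1 - ρ := by linarith
  have hD : 0 < (c * h + 1 - x) ^ 2 + y ^ 2 := by positivity
  refine ⟨?_, ?_, ?_⟩
  · apply div_nonneg _ hD.le
    have h1x : 0 < 1 - x := by linarith
    nlinarith [sq_nonneg y, mul_pos hx1 (add_pos (mul_pos h1 h1x) (by positivity : (0:ℝ) < α₂ * c * h))]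
  · intro hα
    constructor
    · show _ / _ ≤ _ / _
      rw [div_le_div_iff₀ hD (by positivity)]
      have hy2 : y ^ 2 = ρ ^ 2 - x ^ 2 := by linarith
      rw [hy2]
      nlinarith [mul_nonneg (mul_nonneg (mul_nonneg (mul_nonneg
        (sub_nonneg.2 hα.le) hch.le) hDρ.le) (sub_nonneg.2 hxρ))
        (by linarith : (0:ℝ) ≤ c * h + 1 + ρ)]
    · intro t1 ht1 t2 ht2 h12
      have h1a : 0 < c * h + 1 - t1 := by linarith [ht1.2]
      have h2a : 0 < c * h + 1 - t2 := by linarith [ht2.2]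
      show _ / _ < _ / _
      rw [div_lt_div_iff₀ (by positivity) (by positivity)]
      nlinarith [mul_pos (mul_pos (mul_pos (mul_pos h1a h2a)
        (sub_pos.2 h12)) hch) (sub_pos.2 hα)]
  · show _ / _ = _ / _
    rw [div_eq_div_iff (by positivity) (by positivity)]
    ring
end

section
/- Let 0 < α₁, α₂ < 1 and c > 0. The function Ψ_{α₁,α₂}(s) = s^{−(α₂c+α₁s)/(c+s)} (principal branch) is analytic on ℂ ∖ (−∞, 0] and satisfies the sectorial bound: for each d > 0 there exists M < ∞ such that |Ψ_{α₁,α₂}(s)| ≤ M |s|^{−α₁} for all s with Re(s) ≥ d. -/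
/-! On `Re s ≥ d` the exponent splits as `α₁ + (α₂ - α₁) c / (c + s)`, so
`Ψ(s) = s ^ (-α₁) * s ^ w(s)` with `‖w(s)‖ = |α₂ - α₁| c / ‖c + s‖`. The second factor has norm
at most `exp (‖log s‖ ‖w(s)‖)`, and `‖log s‖ ≤ |log ‖s‖| + π / 2` grows only logarithmically,
while `‖c + s‖` dominates both `c + d` and `‖s‖`; hence `‖log s‖ ‖w(s)‖` stays bounded. -/

open Complex Real

lemma mul_add_mul_div_add_eq_add_sub_mul_div {K : Type*} [Field K] {a₁ a₂ c s : K}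
    (h : c + s ≠ 0) : (a₂ * c + a₁ * s) / (c + s) = a₁ + (a₂ - a₁) * c / (c + s) := by
  field_simp
  ring

lemma Real.abs_log_le_abs_log_add {d t : ℝ} (hd : 0 < d) (ht : d ≤ t) :
    |Real.log t| ≤ |Real.log d| + t := by
  have ht0 : 0 ≤ t := hd.le.trans ht
  refine abs_le.mpr ⟨?_, ?_⟩
  · linarith [neg_abs_le (Real.log d), Real.log_le_log hd ht]
  · linarith [Real.log_le_self ht0, abs_nonneg (Real.log d)]

namespace Complex

lemma ofReal_add_ne_zero_of_mem_slitPlane {c : ℝ} (hc : 0 ≤ c) {s : ℂ} (hs : s ∈ slitPlane) :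
    (c : ℂ) + s ≠ 0 := by
  intro h
  rw [eq_neg_of_add_eq_zero_right h, neg_ofReal_mem_slitPlane] at hs
  linarith

lemma norm_le_norm_ofReal_add {c : ℝ} (hc : 0 ≤ c) {s : ℂ} (hs : 0 ≤ s.re) :
    ‖s‖ ≤ ‖(c : ℂ) + s‖ := by
  rw [← sq_le_sq₀ (norm_nonneg _) (norm_nonneg _), Complex.sq_norm, Complex.sq_norm, normSq_apply, normSq_apply]
  simp only [add_re, add_im, ofReal_re, ofReal_im, zero_add]
  nlinarith

lemma norm_cpow_le_exp_norm_log_mul (s w : ℂ) : ‖s ^ w‖ ≤ Real.exp (‖log s‖ * ‖w‖) := by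
  rcases eq_or_ne s 0 with rfl | hs
  · rcases eq_or_ne w 0 with rfl | hw
    · simp
    · simp [zero_cpow hw]
  rw [cpow_def_of_ne_zero hs, norm_exp, ← norm_mul]
  exact Real.exp_le_exp.mpr (re_le_norm _)

lemma norm_cpow_ofReal_add_le {s : ℂ} (hs : s ≠ 0) (a : ℝ) (w : ℂ) :
    ‖s ^ ((a : ℂ) + w)‖ ≤ ‖s‖ ^ a * Real.exp (‖log s‖ * ‖w‖) := by
  rw [cpow_add _ _ hs, norm_mul, norm_cpow_real]
  exact mul_le_mul_of_nonneg_left (norm_cpow_le_exp_norm_log_mul s w) (by positivity)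

lemma norm_log_le_of_re_nonneg {s : ℂ} (hs : 0 ≤ s.re) :
    ‖log s‖ ≤ |Real.log ‖s‖| + π / 2 :=
  calc ‖log s‖ ≤ |(log s).re| + |(log s).im| := norm_le_abs_re_add_abs_im _
    _ ≤ |Real.log ‖s‖| + π / 2 := by
      rw [log_re, log_im]
      gcongr
      exact abs_arg_le_pi_div_two_iff.mpr hs

lemma norm_log_div_norm_ofReal_add_le {c d : ℝ} (hc : 0 ≤ c) (hd : 0 < d) {s : ℂ}
    (hs : d ≤ s.re) :
    ‖log s‖ / ‖(c : ℂ) + s‖ ≤ (|Real.log d| + π / 2) / (c + d) + 1 := by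
  have hs0 : 0 ≤ s.re := hd.le.trans hs
  have hcd : c + d ≤ ‖(c : ℂ) + s‖ :=
    (by simp only [add_re, ofReal_re]; linarith : c + d ≤ ((c : ℂ) + s).re).trans (re_le_norm _)
  have hlog : ‖log s‖ ≤ |Real.log d| + π / 2 + ‖s‖ := by
    have := Real.abs_log_le_abs_log_add hd (hs.trans (re_le_norm s))
    linarith [norm_log_le_of_re_nonneg hs0]
  calc ‖log s‖ / ‖(c : ℂ) + s‖
      ≤ (|Real.log d| + π / 2) / ‖(c : ℂ) + s‖ + ‖s‖ / ‖(c : ℂ) + s‖ := by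
        rw [← add_div]
        gcongr
    _ ≤ (|Real.log d| + π / 2) / (c + d) + 1 := by
        gcongr
        exact div_le_one_of_le₀ (norm_le_norm_ofReal_add hc hs0) (norm_nonneg _)

end Complex

theorem Psi_analytic_and_sectorial_bound_general
    (α₁ α₂ c : ℝ)
    (hc : 0 < c) :
    AnalyticOn ℂ
      (fun s : ℂ => s ^ (-((α₂ * c + α₁ * s) / ((c : ℂ) + s))))
      Complex.slitPlane ∧
    ∀ d : ℝ, 0 < d → ∃ M : ℝ,
      ∀ s : ℂ, d ≤ s.re →
        ‖s ^ (-((α₂ * c + α₁ * s) / ((c : ℂ) + s)))‖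
          ≤ M * ‖s‖ ^ (-α₁) := by
  refine ⟨?_, fun d hd => ?_⟩
  · refine analyticOn_id.cpow (AnalyticOn.neg ?_) fun s hs => hs
    exact ((analyticOn_const.mul analyticOn_const).add (analyticOn_const.mul analyticOn_id)).div
      (analyticOn_const.add analyticOn_id) fun s hs => ofReal_add_ne_zero_of_mem_slitPlane hc.le hs
  · set A := |α₂ - α₁| * c
    refine ⟨Real.exp (A * ((|Real.log d| + π / 2) / (c + d) + 1)), fun s hs => ?_⟩
    have hs0 : 0 < s.re := hd.trans_le hs
    have hcs : (c : ℂ) + s ≠ 0 := ofReal_add_ne_zero_of_mem_slitPlane hc.le (Or.inl hs0)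
    rw [mul_add_mul_div_add_eq_add_sub_mul_div hcs, neg_add, ← ofReal_neg, mul_comm (Real.exp _)]
    refine (norm_cpow_ofReal_add_le (slitPlane_ne_zero (Or.inl hs0)) _ _).trans ?_
    gcongr ‖s‖ ^ _ * Real.exp ?_
    calc ‖log s‖ * ‖-(((α₂ : ℂ) - α₁) * c / (c + s))‖ = A * (‖log s‖ / ‖(c : ℂ) + s‖) := by
          rw [norm_neg, norm_div, norm_mul, ← ofReal_sub, norm_real, norm_real, Real.norm_eq_abs,
            Real.norm_eq_abs, abs_of_pos hc]
          ring
      _ ≤ A * ((|Real.log d| + π / 2) / (c + d) + 1) := by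
          gcongr
          exact norm_log_div_norm_ofReal_add_le hc.le hd hs

theorem Psi_analytic_and_sectorial_bound
    (α₁ α₂ c : ℝ) (h1 : 0 < α₁) (h1' : α₁ < 1) (h2 : 0 < α₂) (h2' : α₂ < 1)
    (hc : 0 < c) :
    AnalyticOn ℂ
      (fun s : ℂ => s ^ (-((α₂ * c + α₁ * s) / ((c : ℂ) + s))))
      Complex.slitPlane ∧
    ∀ d : ℝ, 0 < d → ∃ M : ℝ,
      ∀ s : ℂ, d ≤ s.re →
        ‖s ^ (-((α₂ * c + α₁ * s) / ((c : ℂ) + s)))‖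
          ≤ M * ‖s‖ ^ (-α₁) :=
  Psi_analytic_and_sectorial_bound_general α₁ α₂ c hc
end
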